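/- If S = b·a^A is a finite nonempty subset of BS(1,r), where r ≥ 3 and A ⊆ ℤ is finite with |A| = k, then |S²| = |A + r∗A| ≥ max(4k − 4, 1) ≥ 3k − 2. -/

import Mathlib

open Pointwise

def BSRel (n : ℤ) : Set (FreeGroup Bool) :=
  {FreeGroup.of true * FreeGroup.of false * (FreeGroup.of false * FreeGroup.of true ^ n)⁻¹}

/-- The Baumslag–Solitar group `BS(1,n) = ⟨a, b ∣ a b = b aⁿ⟩`. -/
abbrev BS (n : ℤ) : Type := PresentedGroup (BSRel n)

noncomputable instance (n : ℤ) : DecidableEq (BS n) := Classical.decEq _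

/-- The generator `a` of `BS(1,n)`. -/
def bsa (n : ℤ) : BS n := PresentedGroup.of true

/-- The generator `b` of `BS(1,n)`. -/
def bsb (n : ℤ) : BS n := PresentedGroup.of false

/-!
In `BS(1,r)` the relation gives `aˣ b = b a^(r x)`, hence `(b aˣ)(b aʸ) = b² a^(r x + y)`; as `a` has
infinite order (in the action on `ℚ` by `a : q ↦ q + 1`, `b : q ↦ q / r`), `|S²| = |A + r∗A|`.

For the bound list `A` as `e₀ < ⋯ < eₙ` and cut `ℤ` into the blocks `[(1+r)eₘ, (1+r)eₘ₊₁)`.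
Block `m` contains the sums `(1+r)eₘ < eₘ₊₁ + r eₘ < eₘ + r eₘ₊₁`, and every triple `eⱼ < eⱼ₊₁ < eⱼ₊₂`
puts one more sum into the open "inner" interval between the last two of these in some block:
`eⱼ + r eⱼ₊₂` into block `j + 1` if the gaps increase at `j`, and `eⱼ₊₂ + r eⱼ` into block `j`
otherwise. When two triples use the same block their sums differ, since `r ≥ 3`.
Together with `(1+r)eₙ` this gives `3n + (n - 1) + 1 = 4n` distinct sums.
-/

open Finset

section Counting

variable {α : Type*} [LinearOrder α] {C : Finset α}

theorem card_filter_lt_add_card_filter_Ico {a b : α} (hab : a ≤ b) :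
    #{x ∈ C | x < a} + #{x ∈ C | a ≤ x ∧ x < b} = #{x ∈ C | x < b} := by
  rw [← card_union_of_disjoint (disjoint_filter.mpr fun _ _ h h' => h'.1.not_gt h)]
  congr 1
  ext x
  simp only [mem_union, mem_filter]
  constructor
  · rintro (⟨hx, h⟩ | ⟨hx, -, h⟩)
    exacts [⟨hx, h.trans_le hab⟩, ⟨hx, h⟩]
  · rintro ⟨hx, h⟩
    exact (lt_or_ge x a).imp (⟨hx, ·⟩) (⟨hx, ·, h⟩)

theorem three_add_card_filter_Ioo_le {a b u v w : α}
    (hau : a ≤ u) (huv : u < v) (hvw : v < w) (hwb : w < b) (hu : u ∈ C) (hv : v ∈ C)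
    (hw : w ∈ C) : 3 + #{x ∈ C | v < x ∧ x < w} ≤ #{x ∈ C | a ≤ x ∧ x < b} := by
  set T := C.filter fun x => v < x ∧ x < w
  have hvT : v ∉ T := by simp [T]
  have hwT : w ∉ insert v T := by simp [T, hvw.ne']
  have huT : u ∉ insert w (insert v T) := by simp [T, huv.ne, (huv.trans hvw).ne, huv.not_gt]
  calc 3 + #T = #(insert u (insert w (insert v T))) := by
        rw [card_insert_of_notMem huT, card_insert_of_notMem hwT, card_insert_of_notMem hvT]
        omega
    _ ≤ _ := by
      refine card_le_card fun x hx => ?_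
      simp only [T, mem_insert, mem_filter] at hx ⊢
      rcases hx with rfl | rfl | rfl | ⟨hx, hvx, hxw⟩
      · exact ⟨hu, hau, huv.trans (hvw.trans hwb)⟩
      · exact ⟨hw, hau.trans (huv.trans hvw).le, hwb⟩
      · exact ⟨hv, hau.trans huv.le, hvw.trans hwb⟩
      · exact ⟨hx, hau.trans (huv.trans hvx).le, hxw.trans hwb⟩

end Counting

section Blocks

variable {e : ℕ → ℤ} {r : ℤ} {C : Finset ℤ} {n j : ℕ}

def GapIncreasesAt (e : ℕ → ℤ) (j : ℕ) : Prop := e (j + 1) - e j < e (j + 2) - e (j + 1)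

theorem add_mul_mem_Ioo_of_gapIncreasesAt (hr : 3 ≤ r) (h₀ : e j < e (j + 1))
    (h₁ : e (j + 1) < e (j + 2)) (hg : GapIncreasesAt e j) :
    e j + r * e (j + 2) ∈ Set.Ioo (e (j + 2) + r * e (j + 1)) (e (j + 1) + r * e (j + 2)) := by
  unfold GapIncreasesAt at hg
  constructor <;> nlinarith

theorem add_mul_mem_Ioo_of_not_gapIncreasesAt (hr : 3 ≤ r) (h₀ : e j < e (j + 1))
    (h₁ : e (j + 1) < e (j + 2)) (hg : ¬GapIncreasesAt e j) :
    e (j + 2) + r * e j ∈ Set.Ioo (e (j + 1) + r * e j) (e j + r * e (j + 1)) := by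
  unfold GapIncreasesAt at hg
  constructor <;> nlinarith

theorem add_mul_ne_add_mul_of_gapIncreasesAt (hr : 3 ≤ r) (h₁ : e (j + 1) < e (j + 2))
    (hg : GapIncreasesAt e j) (hg' : ¬GapIncreasesAt e (j + 1)) :
    e j + r * e (j + 2) ≠ e (j + 3) + r * e (j + 1) := by
  unfold GapIncreasesAt at hg hg'
  intro h
  nlinarith

theorem card_filter_lt_add_three_add_card_inner_le (hr : 3 ≤ r) (he : ∀ i < n, e i < e (i + 1))
    (hC : ∀ i ≤ n, ∀ j ≤ n, e i + r * e j ∈ C) {m : ℕ} (hm : m + 1 ≤ n) :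
    #{x ∈ C | x < e m + r * e m} + 3 +
        #{x ∈ C | e (m + 1) + r * e m < x ∧ x < e m + r * e (m + 1)}
      ≤ #{x ∈ C | x < e (m + 1) + r * e (m + 1)} := by
  have hlt := he m hm
  have hblock := three_add_card_filter_Ioo_le (C := C) le_rfl
    (by linarith : e m + r * e m < e (m + 1) + r * e m) (by nlinarith)
    (by linarith : e m + r * e (m + 1) < e (m + 1) + r * e (m + 1))
    (hC m (by omega) m (by omega)) (hC (m + 1) hm m (by omega)) (hC m (by omega) (m + 1) hm)
  rw [← card_filter_lt_add_card_filter_Ico (a := e m + r * e m)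
    (b := e (m + 1) + r * e (m + 1)) (by nlinarith)]
  omega

theorem one_le_card_inner_succ (hr : 3 ≤ r) (he : ∀ i < n, e i < e (i + 1))
    (hC : ∀ i ≤ n, ∀ j ≤ n, e i + r * e j ∈ C) (hj : j + 2 ≤ n) (hg : GapIncreasesAt e j) :
    1 ≤ #{x ∈ C | e (j + 2) + r * e (j + 1) < x ∧ x < e (j + 1) + r * e (j + 2)} :=
  card_pos.mpr ⟨_, mem_filter.mpr ⟨hC j (by omega) (j + 2) hj,
    add_mul_mem_Ioo_of_gapIncreasesAt hr (he j (by omega)) (he (j + 1) (by omega)) hg⟩⟩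

theorem one_le_card_inner (hr : 3 ≤ r) (he : ∀ i < n, e i < e (i + 1))
    (hC : ∀ i ≤ n, ∀ j ≤ n, e i + r * e j ∈ C) (hj : j + 2 ≤ n) (hg : ¬GapIncreasesAt e j) :
    1 ≤ #{x ∈ C | e (j + 1) + r * e j < x ∧ x < e j + r * e (j + 1)} :=
  card_pos.mpr ⟨_, mem_filter.mpr ⟨hC (j + 2) hj j (by omega),
    add_mul_mem_Ioo_of_not_gapIncreasesAt hr (he j (by omega)) (he (j + 1) (by omega)) hg⟩⟩

theorem two_le_card_inner_succ (hr : 3 ≤ r) (he : ∀ i < n, e i < e (i + 1))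
    (hC : ∀ i ≤ n, ∀ j ≤ n, e i + r * e j ∈ C) (hj : j + 3 ≤ n) (hg : GapIncreasesAt e j)
    (hg' : ¬GapIncreasesAt e (j + 1)) :
    2 ≤ #{x ∈ C | e (j + 2) + r * e (j + 1) < x ∧ x < e (j + 1) + r * e (j + 2)} :=
  one_lt_card.mpr ⟨_, mem_filter.mpr ⟨hC j (by omega) (j + 2) (by omega),
    add_mul_mem_Ioo_of_gapIncreasesAt hr (he j (by omega)) (he (j + 1) (by omega)) hg⟩,
    _, mem_filter.mpr ⟨hC (j + 3) hj (j + 1) (by omega),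
    add_mul_mem_Ioo_of_not_gapIncreasesAt hr (he (j + 1) (by omega)) (he (j + 2) (by omega)) hg'⟩,
    add_mul_ne_add_mul_of_gapIncreasesAt hr (he (j + 1) (by omega)) hg hg'⟩

/-- Blocks `0, …, j` contain their `3 (j + 1)` sums `eₘ + r eₘ'` with `m' ∈ {m, m + 1}` and the sums
of the triples `0, …, j - 1`; that of triple `j` lies there too unless the gaps increase at `j`. -/
theorem four_mul_add_three_le_card_filter_lt (hr : 3 ≤ r) (he : ∀ i < n, e i < e (i + 1))
    (hC : ∀ i ≤ n, ∀ j ≤ n, e i + r * e j ∈ C) :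
    ∀ j, j + 2 ≤ n → 4 * j + 3 ≤ #{x ∈ C | x < e (j + 1) + r * e (j + 1)} ∧
      (¬GapIncreasesAt e j → 4 * j + 4 ≤ #{x ∈ C | x < e (j + 1) + r * e (j + 1)})
  | 0, hn => by
    have := card_filter_lt_add_three_add_card_inner_le hr he hC (m := 0) (by omega)
    exact ⟨by omega, fun hg => by have := one_le_card_inner hr he hC hn hg; omega⟩
  | j + 1, hn => by
    obtain ⟨ih, ih'⟩ := four_mul_add_three_le_card_filter_lt hr he hC j (by omega)
    have hstep := card_filter_lt_add_three_add_card_inner_le hr he hC (m := j + 1) (by omega)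
    rw [show j + 1 + 1 = j + 2 from rfl] at hstep ⊢
    by_cases hg : GapIncreasesAt e j
    · have := one_le_card_inner_succ hr he hC (by omega) hg
      refine ⟨by omega, fun hg' => ?_⟩
      have := two_le_card_inner_succ hr he hC hn hg hg'
      omega
    · have := ih' hg
      refine ⟨by omega, fun hg' => ?_⟩
      have := one_le_card_inner hr he hC hn hg'
      rw [show j + 1 + 1 = j + 2 from rfl] at this
      omega

theorem four_mul_le_card (hr : 3 ≤ r) (he : ∀ i < n, e i < e (i + 1))
    (hC : ∀ i ≤ n, ∀ j ≤ n, e i + r * e j ∈ C) : 4 * n ≤ #C := by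
  have htop : #{x ∈ C | x < e n + r * e n} < #C :=
    card_lt_card (filter_ssubset.mpr ⟨_, hC n le_rfl n le_rfl, lt_irrefl _⟩)
  obtain _ | _ | j := n
  · omega
  · have := card_filter_lt_add_three_add_card_inner_le hr he hC (m := 0) le_rfl
    omega
  · obtain ⟨ih, ih'⟩ := four_mul_add_three_le_card_filter_lt hr he hC j le_rfl
    have hstep := card_filter_lt_add_three_add_card_inner_le hr he hC (m := j + 1) le_rfl
    rw [show j + 1 + 1 = j + 2 from rfl] at hstep htop
    by_cases hg : GapIncreasesAt e j
    · have := one_le_card_inner_succ hr he hC le_rfl hg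
      omega
    · have := ih' hg
      omega

end Blocks

section BaumslagSolitar

variable {r : ℤ}

theorem bsa_mul_bsb : bsa r * bsb r = bsb r * bsa r ^ r :=
  mul_inv_eq_one.mp <| (QuotientGroup.eq_one_iff _).mpr <| Subgroup.subset_normalClosure rfl

theorem bsa_zpow_mul_bsb (x : ℤ) : bsa r ^ x * bsb r = bsb r * bsa r ^ (r * x) := by
  have hconj : (bsb r)⁻¹ * bsa r * (bsb r)⁻¹⁻¹ = bsa r ^ r := by
    rw [inv_inv, mul_assoc, bsa_mul_bsb, inv_mul_cancel_left]
  rw [zpow_mul, ← hconj, conj_zpow, inv_inv, mul_assoc, mul_inv_cancel_left]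

theorem bsb_mul_bsa_zpow_mul (x y : ℤ) :
    bsb r * bsa r ^ x * (bsb r * bsa r ^ y) = bsb r * bsb r * bsa r ^ (r * x + y) := by
  rw [zpow_add, mul_assoc (bsb r), ← mul_assoc (bsa r ^ x), bsa_zpow_mul_bsb]
  group

noncomputable def affineRep (hr : r ≠ 0) : BS r →* Equiv.Perm ℚ :=
  PresentedGroup.toGroup (f := fun x : Bool => (if x then Equiv.addRight 1
      else Equiv.mulRight₀ (r : ℚ)⁻¹ (by simpa using hr) : Equiv.Perm ℚ)) <| by
    rintro _ rfl
    rw [map_mul, map_inv, mul_inv_eq_one]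
    ext q
    simp [Equiv.Perm.mul_apply, add_mul, hr]

theorem affineRep_bsa_zpow (hr : r ≠ 0) (m : ℤ) : affineRep hr (bsa r ^ m) 0 = m := by
  simp [affineRep, bsa]

theorem bsa_zpow_injective (hr : r ≠ 0) : Function.Injective (bsa r ^ · : ℤ → BS r) := by
  intro m n h
  have h0 := congrArg (affineRep hr · 0) h
  simp only [affineRep_bsa_zpow] at h0
  exact_mod_cast h0

end BaumslagSolitar

theorem four_mul_card_sub_four_le_card_image₂ {r : ℤ} (hr : 3 ≤ r) (A : Finset ℤ) :
    4 * (#A : ℤ) - 4 ≤ #(image₂ (fun x y => x + r * y) A A) := by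
  obtain h | hA := Nat.eq_zero_or_pos #A
  · simp [h]
  set e : ℕ → ℤ := fun i => if h : i < #A then A.orderEmbOfFin rfl ⟨i, h⟩ else 0
  have he : ∀ i < #A - 1, e i < e (i + 1) := fun i hi => by
    simp only [e, dif_pos (by omega : i < #A), dif_pos (by omega : i + 1 < #A)]
    exact (A.orderEmbOfFin rfl).strictMono (Fin.mk_lt_mk.mpr i.lt_succ_self)
  have hmem : ∀ i ≤ #A - 1, e i ∈ A := fun i hi => by
    simp only [e, dif_pos (by omega : i < #A)]
    exact A.orderEmbOfFin_mem rfl _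
  have := four_mul_le_card (C := image₂ (fun x y => x + r * y) A A) hr he fun i hi j hj =>
    mem_image₂_of_mem (hmem i hi) (hmem j hj)
  omega

theorem card_image_mul_image {r : ℤ} (hr : r ≠ 0) (A : Finset ℤ) :
    #(A.image (bsb r * bsa r ^ ·) * A.image (bsb r * bsa r ^ ·)) =
      #(image₂ (fun x y => x + r * y) A A) := by
  have hprod : A.image (bsb r * bsa r ^ ·) * A.image (bsb r * bsa r ^ ·) =
      (image₂ (fun x y => x + r * y) A A).image (bsb r * bsb r * bsa r ^ ·) := by
    change image₂ (· * ·) _ _ = _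
    rw [image₂_image_left, image₂_image_right, image_image₂, image₂_swap]
    exact image₂_congr fun x _ y _ => by rw [bsb_mul_bsa_zpow_mul, add_comm]
  rw [hprod, card_image_of_injective _ fun m m' h => bsa_zpow_injective hr (mul_left_cancel h)]

theorem stmt11 (r : ℤ) (hr : 3 ≤ r) (A : Finset ℤ) (hA : A.Nonempty) (k : ℕ)
    (hk : A.card = k) (S : Finset (BS r))
    (hS : S = A.image (fun x => bsb r * bsa r ^ x)) :
    ((S * S).card : ℤ) = (Finset.image₂ (fun x y => x + r * y) A A).card ∧
    max (4 * (k : ℤ) - 4) 1 ≤ ((S * S).card : ℤ) ∧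
    3 * (k : ℤ) - 2 ≤ max (4 * (k : ℤ) - 4) 1 := by
  have hSS : ((S * S).card : ℤ) = #(image₂ (fun x y => x + r * y) A A) := by
    rw [hS, card_image_mul_image (by omega)]
  refine ⟨hSS, max_le ?_ ?_, by omega⟩
  · rw [hSS, ← hk]
    exact four_mul_card_sub_four_le_card_image₂ hr A
  · rw [hSS]
    exact_mod_cast (hA.image₂ hA).card_pos
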